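/- Let g(z) = (z − a_1)⋯(z − a_m) ∈ ℂ[z] with m ≥ 2, d ≥ 1, and f(z) = g(z^d). If z ∈ ℂ satisfies d·log|z| > log⁺ max_i|a_i| + (m/(m−1))·log 2, then the escape-rate function G_f(z) = lim_{k→∞} (dm)^{−k} log⁺|f^k(z)| satisfies log|z| − (m/(dm−1))·log 2 ≤ G_f(z) ≤ log|z| + (m/(dm−1))·log(3/2). -/

import Mathlib

open Polynomial Filter

/-- `log⁺ t = max (log t) 0`. -/
noncomputable def logPlus (t : ℝ) : ℝ := max (Real.log t) 0

/-!
Outside the disc of radius `(2^{m/(m-1)} · max(1, max_i |a_i|))^{1/d}` every root satisfies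
`|a_i| ≤ |z|^d/2`, so each factor of `f(z) = ∏ (z^d - a_i)` lies between `|z|^d/2` and
`3|z|^d/2`; the exponent `m/(m-1)` is what makes this region forward invariant. Along the orbit,
`u_k = log|f^k(z)|` therefore satisfies `dm·u_k - m log 2 ≤ u_{k+1} ≤ dm·u_k + m log(3/2)`, and
shifting `u_k` by the fixed points of these two affine maps squeezes `u_k/(dm)^k` between a
monotone and an antitone sequence with a common limit.
-/

open Real Set Topology

theorem le_exp_logPlus (t : ℝ) : t ≤ exp (logPlus t) := by
  rcases le_or_gt t 0 with ht | ht
  · exact ht.trans (exp_pos _).le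
  · calc t = exp (log t) := (exp_log ht).symm
      _ ≤ exp (logPlus t) := exp_le_exp.mpr (le_max_left _ _)

section GrowthRate

variable {x u : ℕ → ℝ} {D : ℝ}

theorem monotone_div_pow_of_mul_le (hD : 0 < D) (h : ∀ k, D * x k ≤ x (k + 1)) :
    Monotone fun k => x k / D ^ k :=
  monotone_nat_of_le_succ fun k => by
    rw [pow_succ', ← div_div, div_le_div_iff_of_pos_right (pow_pos hD k), le_div_iff₀' hD]
    exact h k

theorem antitone_div_pow_of_le_mul (hD : 0 < D) (h : ∀ k, x (k + 1) ≤ D * x k) :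
    Antitone fun k => x k / D ^ k := by
  have hneg := monotone_div_pow_of_mul_le (x := -x) hD fun k => by simpa using h k
  intro i j hij
  simpa [neg_div] using hneg hij

theorem exists_tendsto_div_pow_of_affine_bounds {α β : ℝ} (hD : 1 < D)
    (hlow : ∀ k, D * u k - α ≤ u (k + 1)) (hup : ∀ k, u (k + 1) ≤ D * u k + β) :
    ∃ L, Tendsto (fun k => u k / D ^ k) atTop (𝓝 L) ∧
      u 0 - α / (D - 1) ≤ L ∧ L ≤ u 0 + β / (D - 1) := by
  have hD0 : 0 < D := by linarith
  have hD1 : 0 < D - 1 := by linarith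
  -- `α/(D-1)` and `-β/(D-1)` are the fixed points of `t ↦ D t - α` and `t ↦ D t + β`.
  set lo := fun k => (u k - α / (D - 1)) / D ^ k
  set hi := fun k => (u k + β / (D - 1)) / D ^ k
  have hlo : Monotone lo := monotone_div_pow_of_mul_le hD0 fun k => by
    have e : D * (u k - α / (D - 1)) = D * u k - α - α / (D - 1) := by field_simp; ring
    linarith [hlow k]
  have hhi : Antitone hi := antitone_div_pow_of_le_mul hD0 fun k => by
    have e : D * (u k + β / (D - 1)) = D * u k + β + β / (D - 1) := by field_simp; ring
    linarith [hup k]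
  have hlo_le_hi : ∀ k, lo k ≤ hi k := fun k => by
    have hαβ : 0 ≤ (α + β) / (D - 1) := div_nonneg (by linarith [hlow 0, hup 0]) hD1.le
    have e : (α + β) / (D - 1) = α / (D - 1) + β / (D - 1) := add_div _ _ _
    exact div_le_div_of_nonneg_right (by linarith) (pow_pos hD0 k).le
  have hbdd : BddAbove (range lo) :=
    ⟨hi 0, forall_mem_range.2 fun k => (hlo_le_hi k).trans (hhi (Nat.zero_le k))⟩
  set L := ⨆ k, lo k
  have hlo_lim : Tendsto lo atTop (𝓝 L) := tendsto_atTop_ciSup hlo hbdd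
  have hdecay : Tendsto (fun k => (D ^ k)⁻¹) atTop (𝓝 0) :=
    tendsto_inv_atTop_zero.comp (tendsto_pow_atTop_atTop_of_one_lt hD)
  have hu_lim : Tendsto (fun k => u k / D ^ k) atTop (𝓝 L) := by
    have h := hlo_lim.add (hdecay.const_mul (α / (D - 1)))
    rw [mul_zero, add_zero] at h
    exact h.congr fun k => by simp only [lo]; ring
  have hhi_lim : Tendsto hi atTop (𝓝 L) := by
    have h := hu_lim.add (hdecay.const_mul (β / (D - 1)))
    rw [mul_zero, add_zero] at h
    exact h.congr fun k => by simp only [hi]; ring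
  refine ⟨L, hu_lim, ?_, ?_⟩
  · simpa [lo] using hlo.ge_of_tendsto hlo_lim 0
  · simpa [hi] using hhi.le_of_tendsto hhi_lim 0

end GrowthRate

section ProductBounds

variable {𝕜 ι : Type*} [NormedField 𝕜] [Fintype ι] {a : ι → 𝕜} {y : 𝕜}

theorem half_norm_pow_le_norm_prod_sub (ha : ∀ i, ‖a i‖ ≤ ‖y‖ / 2) :
    (‖y‖ / 2) ^ Fintype.card ι ≤ ‖∏ i, (y - a i)‖ := by
  rw [norm_prod, ← Finset.card_univ, ← Finset.prod_const]
  exact Finset.prod_le_prod (fun _ _ => by positivity)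
    fun i _ => by linarith [norm_sub_norm_le y (a i), ha i]

theorem norm_prod_sub_le_pow (ha : ∀ i, ‖a i‖ ≤ ‖y‖ / 2) :
    ‖∏ i, (y - a i)‖ ≤ (3 / 2 * ‖y‖) ^ Fintype.card ι := by
  rw [norm_prod, ← Finset.card_univ, ← Finset.prod_const]
  exact Finset.prod_le_prod (fun _ _ => norm_nonneg _)
    fun i _ => by linarith [norm_sub_le y (a i), ha i]

theorem log_norm_eval_comp_pow_bounds (d : ℕ) {w : 𝕜} (hw : w ≠ 0)
    (ha : ∀ i, ‖a i‖ ≤ ‖w‖ ^ d / 2) :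
    (Fintype.card ι : ℝ) * (d * log ‖w‖ - log 2) ≤
        log ‖((∏ i, (X - C (a i))).comp (X ^ d)).eval w‖ ∧
      log ‖((∏ i, (X - C (a i))).comp (X ^ d)).eval w‖ ≤
        (Fintype.card ι : ℝ) * (d * log ‖w‖ + log (3 / 2)) := by
  have heval : ((∏ i, (X - C (a i))).comp (X ^ d)).eval w = ∏ i, (w ^ d - a i) := by
    simp [eval_comp, eval_prod]
  have hwd : 0 < ‖w ^ d‖ := norm_pos_iff.mpr (pow_ne_zero d hw)
  have ha' : ∀ i, ‖a i‖ ≤ ‖w ^ d‖ / 2 := by simpa only [norm_pow] using ha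
  have hlower := half_norm_pow_le_norm_prod_sub ha'
  rw [heval]
  constructor
  · calc (Fintype.card ι : ℝ) * (d * log ‖w‖ - log 2)
          = log ((‖w ^ d‖ / 2) ^ Fintype.card ι) := by
            rw [log_pow, log_div hwd.ne' two_ne_zero, norm_pow, log_pow]
      _ ≤ log ‖∏ i, (w ^ d - a i)‖ := log_le_log (by positivity) hlower
  · calc log ‖∏ i, (w ^ d - a i)‖ ≤ log ((3 / 2 * ‖w ^ d‖) ^ Fintype.card ι) :=
          log_le_log (lt_of_lt_of_le (by positivity) hlower) (norm_prod_sub_le_pow ha')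
      _ = (Fintype.card ι : ℝ) * (d * log ‖w‖ + log (3 / 2)) := by
          rw [log_pow, log_mul (by norm_num) hwd.ne', norm_pow, log_pow]; ring

end ProductBounds

section EscapeRegion

variable {𝕜 : Type*} [NormedField 𝕜] {m : ℕ}

def escapeRegion (a : Fin m → 𝕜) (d : ℕ) : Set 𝕜 :=
  {w | logPlus (⨆ i, ‖a i‖) + ((m : ℝ) / (m - 1)) * log 2 < d * log ‖w‖}

variable {a : Fin m → 𝕜} {d : ℕ} {w : 𝕜}

theorem escapeThreshold_pos (hm : 2 ≤ m) :
    0 < logPlus (⨆ i, ‖a i‖) + ((m : ℝ) / (m - 1)) * log 2 := by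
  have hmR : (2 : ℝ) ≤ m := by exact_mod_cast hm
  have hA : 0 ≤ logPlus (⨆ i, ‖a i‖) := le_max_right _ _
  have hc : 0 < (m : ℝ) / (m - 1) := div_pos (by linarith) (by linarith)
  have := mul_pos hc (log_pos one_lt_two)
  linarith

theorem pos_and_log_norm_pos_of_mem_escapeRegion (hm : 2 ≤ m) (hw : w ∈ escapeRegion a d) :
    0 < d ∧ 0 < log ‖w‖ := by
  have h : 0 < (d : ℝ) * log ‖w‖ := (escapeThreshold_pos hm).trans hw
  have hlog : 0 < log ‖w‖ := pos_of_mul_pos_right h (Nat.cast_nonneg d)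
  exact ⟨by exact_mod_cast pos_of_mul_pos_left h hlog.le, hlog⟩

theorem norm_le_half_pow_of_mem_escapeRegion (hm : 2 ≤ m) (hw : w ∈ escapeRegion a d)
    (i : Fin m) : ‖a i‖ ≤ ‖w‖ ^ d / 2 := by
  set A := logPlus (⨆ i, ‖a i‖)
  have hmR : (2 : ℝ) ≤ m := by exact_mod_cast hm
  have hc : 1 ≤ (m : ℝ) / (m - 1) := by rw [le_div_iff₀ (by linarith)]; linarith
  have hw1 : 1 < ‖w‖ :=
    (log_pos_iff (norm_nonneg w)).mp (pos_and_log_norm_pos_of_mem_escapeRegion hm hw).2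
  have hlog : log (2 * exp A) < log (‖w‖ ^ d) := by
    have : log 2 ≤ (m : ℝ) / (m - 1) * log 2 := le_mul_of_one_le_left (log_nonneg one_le_two) hc
    rw [log_mul two_ne_zero (exp_pos A).ne', log_exp, log_pow]
    have hw' : A + (m : ℝ) / (m - 1) * log 2 < d * log ‖w‖ := hw
    linarith
  have hexp : 2 * exp A < ‖w‖ ^ d := (log_lt_log_iff (by positivity) (by positivity)).mp hlog
  have hai : ‖a i‖ ≤ ⨆ i, ‖a i‖ := le_ciSup (f := fun i => ‖a i‖) (finite_range _).bddAbove i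
  linarith [le_exp_logPlus (⨆ i, ‖a i‖)]

theorem log_norm_eval_bounds_of_mem_escapeRegion (hm : 2 ≤ m) (hw : w ∈ escapeRegion a d) :
    d * m * log ‖w‖ - m * log 2 ≤ log ‖((∏ i, (X - C (a i))).comp (X ^ d)).eval w‖ ∧
      log ‖((∏ i, (X - C (a i))).comp (X ^ d)).eval w‖ ≤ d * m * log ‖w‖ + m * log (3 / 2) := by
  have hw0 : w ≠ 0 := by
    rintro rfl
    simpa using (pos_and_log_norm_pos_of_mem_escapeRegion hm hw).2
  obtain ⟨hlow, hup⟩ := log_norm_eval_comp_pow_bounds d hw0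
    (norm_le_half_pow_of_mem_escapeRegion hm hw)
  rw [Fintype.card_fin] at hlow hup
  constructor <;> linarith

theorem mapsTo_escapeRegion (hm : 2 ≤ m) :
    MapsTo (fun w => ((∏ i, (X - C (a i))).comp (X ^ d)).eval w)
      (escapeRegion a d) (escapeRegion a d) := by
  intro w hw
  set A := logPlus (⨆ i, ‖a i‖)
  set c := (m : ℝ) / (m - 1)
  have hmR : (2 : ℝ) ≤ m := by exact_mod_cast hm
  have hA : 0 ≤ A := le_max_right _ _
  -- `m (c - 1) = c` is what lets the threshold reproduce itself under `f`.
  have hc : (m : ℝ) * (c - 1) = c := by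
    have : (m : ℝ) - 1 ≠ 0 := by linarith
    simp only [c]; field_simp; ring
  obtain ⟨hd, -⟩ := pos_and_log_norm_pos_of_mem_escapeRegion hm hw
  have hdR : (1 : ℝ) ≤ d := by exact_mod_cast hd
  have hw' : A + c * log 2 < d * log ‖w‖ := hw
  have hstep : A + c * log 2 < log ‖((∏ i, (X - C (a i))).comp (X ^ d)).eval w‖ := by
    have hmul := mul_lt_mul_of_pos_left hw' (by linarith : (0 : ℝ) < m)
    have hgain : m * c * log 2 - m * log 2 = c * log 2 := by linear_combination log 2 * hc
    have hmA : A ≤ m * A := le_mul_of_one_le_left hA (by linarith)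
    linarith [(log_norm_eval_bounds_of_mem_escapeRegion hm hw).1]
  have hpos := (escapeThreshold_pos (a := a) hm).trans hstep
  exact hstep.trans_le (le_mul_of_one_le_left hpos.le hdR)

end EscapeRegion

theorem arch_green_function_estimate_general (m : ℕ) (hm : 2 ≤ m) (d : ℕ)
    (a : Fin m → ℂ) (g : Polynomial ℂ) (hg : g = ∏ i : Fin m, (X - C (a i)))
    (f : Polynomial ℂ) (hf : f = g.comp (X ^ d))
    (z : ℂ) (hz : (d : ℝ) * Real.log (‖z‖) >
      logPlus (⨆ i, ‖a i‖) + ((m : ℝ) / (m - 1)) * Real.log 2) :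
    ∃ L : ℝ,
      Tendsto (fun k : ℕ =>
          logPlus ‖(fun w => f.eval w)^[k] z‖ / ((d * m : ℝ)) ^ k)
        atTop (nhds L) ∧
      Real.log (‖z‖) - ((m : ℝ) / (d * m - 1)) * Real.log 2 ≤ L ∧
      L ≤ Real.log (‖z‖) + ((m : ℝ) / (d * m - 1)) * Real.log (3 / 2) := by
  subst hf hg
  set F := fun w => ((∏ i, (X - C (a i))).comp (X ^ d)).eval w
  have horbit : ∀ k, F^[k] z ∈ escapeRegion a d := fun k =>
    (mapsTo_escapeRegion hm).iterate k hz
  have hD : 1 < (d * m : ℝ) := by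
    have hd : (1 : ℝ) ≤ d := by exact_mod_cast (pos_and_log_norm_pos_of_mem_escapeRegion hm hz).1
    have hmR : (2 : ℝ) ≤ m := by exact_mod_cast hm
    nlinarith
  obtain ⟨L, hlim, hlow, hup⟩ := exists_tendsto_div_pow_of_affine_bounds
    (u := fun k => log ‖F^[k] z‖) (α := m * log 2) (β := m * log (3 / 2)) hD
    (fun k => by
      rw [Function.iterate_succ_apply']
      linarith [(log_norm_eval_bounds_of_mem_escapeRegion hm (horbit k)).1])
    (fun k => by
      rw [Function.iterate_succ_apply']
      linarith [(log_norm_eval_bounds_of_mem_escapeRegion hm (horbit k)).2])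
  refine ⟨L, hlim.congr fun k => ?_, by rwa [← mul_div_right_comm], by rwa [← mul_div_right_comm]⟩
  rw [logPlus, max_eq_left (pos_and_log_norm_pos_of_mem_escapeRegion hm (horbit k)).2.le]

/-- Archimedean escape rate: if `g(z) = (z-a_1)⋯(z-a_m)` with `m ≥ 2`,
`f(z) = g(z^d)` and `d·log|z| > log⁺ max_i |a_i| + (m/(m-1))·log 2`, then the
escape-rate function `G_f(z) = lim_k (dm)^{-k} log⁺|f^k(z)|` exists and satisfies
`log|z| - (m/(dm-1))·log 2 ≤ G_f(z) ≤ log|z| + (m/(dm-1))·log(3/2)`. -/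
theorem arch_green_function_estimate (m : ℕ) (hm : 2 ≤ m) (d : ℕ) (hd : 1 ≤ d)
    (a : Fin m → ℂ) (g : Polynomial ℂ) (hg : g = ∏ i : Fin m, (X - C (a i)))
    (f : Polynomial ℂ) (hf : f = g.comp (X ^ d))
    (z : ℂ) (hz : (d : ℝ) * Real.log (‖z‖) >
      logPlus (⨆ i, ‖a i‖) + ((m : ℝ) / (m - 1)) * Real.log 2) :
    ∃ L : ℝ,
      Tendsto (fun k : ℕ =>
          logPlus ‖(fun w => f.eval w)^[k] z‖ / ((d * m : ℝ)) ^ k)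
        atTop (nhds L) ∧
      Real.log (‖z‖) - ((m : ℝ) / (d * m - 1)) * Real.log 2 ≤ L ∧
      L ≤ Real.log (‖z‖) + ((m : ℝ) / (d * m - 1)) * Real.log (3 / 2) :=
  arch_green_function_estimate_general m hm d a g hg f hf z hz
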